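/- If G is a finite tree (a connected acyclic simple graph), then the primitive hole number of its line graph satisfies h(L(G)) = Σ_{v ∈ V(G)} C(deg(v), 3), the sum over all vertices v of G of the binomial coefficient of the degree of v choose 3. -/

import Mathlib

/-- The primitive hole number of a simple graph: the number of triangles
(3-cliques) in the graph. -/
noncomputable def SimpleGraph.holeNumber {V : Type*} (G : SimpleGraph V) : ℕ :=
  {s : Finset V | G.IsNClique 3 s}.ncard

/-- The primitive degree of a vertex: the number of triangles (3-cliques)
of the graph containing that vertex. -/
noncomputable def SimpleGraph.primDegree {V : Type*} (G : SimpleGraph V) (v : V) : ℕ :=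
  {s : Finset V | G.IsNClique 3 s ∧ v ∈ s}.ncard

/-- The total graph of a simple graph `G`: vertices are the vertices and edges of `G`,
two of them adjacent iff the corresponding elements of `G` are adjacent or incident. -/
def SimpleGraph.totalGraph {V : Type*} (G : SimpleGraph V) :
    SimpleGraph (V ⊕ G.edgeSet) where
  Adj x y :=
    match x, y with
    | Sum.inl u, Sum.inl v => G.Adj u v
    | Sum.inl u, Sum.inr e => u ∈ (e : Sym2 V)
    | Sum.inr e, Sum.inl u => u ∈ (e : Sym2 V)
    | Sum.inr e, Sum.inr f => e ≠ f ∧ ∃ v, v ∈ (e : Sym2 V) ∧ v ∈ (f : Sym2 V)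
  symm := by
    constructor
    rintro (u | e) (v | f) h
    · exact h.symm
    · exact h
    · exact h
    · exact ⟨h.1.symm, h.2.imp fun v hv => ⟨hv.2, hv.1⟩⟩
  loopless := by
    constructor
    rintro (u | e) h
    · exact h.ne rfl
    · exact h.1 rfl

/-!
A triangle of the line graph consists of three pairwise incident edges. In a triangle-free graph
(a tree, say) three such edges must pass through one common vertex, since otherwise their
endpoints would span a triangle; and two distinct vertices share at most one edge. So the
triangles of `L(G)` are partitioned by their common vertex `v`, and those through `v` are the
`3`-subsets of the `deg v` edges at `v`.
-/

namespace SimpleGraph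

open Finset

variable {V : Type*} {G : SimpleGraph V}

theorem CliqueFree.exists_mem_of_pairwise_meet (hG : G.CliqueFree 3) {e₁ e₂ e₃ : Sym2 V}
    (h₁ : e₁ ∈ G.edgeSet) (h₂ : e₂ ∈ G.edgeSet) (h₃ : e₃ ∈ G.edgeSet)
    (h₁₂ : ∃ v, v ∈ e₁ ∧ v ∈ e₂) (h₁₃ : ∃ v, v ∈ e₁ ∧ v ∈ e₃) (h₂₃ : ∃ v, v ∈ e₂ ∧ v ∈ e₃) :
    ∃ v, v ∈ e₁ ∧ v ∈ e₂ ∧ v ∈ e₃ := by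
  classical
  obtain ⟨x, hx₁, hx₂⟩ := h₁₂
  obtain ⟨y, hy₁, hy₃⟩ := h₁₃
  obtain ⟨z, hz₂, hz₃⟩ := h₂₃
  by_cases hxy : x = y
  · exact ⟨x, hx₁, hx₂, hxy ▸ hy₃⟩
  by_cases hxz : x = z
  · exact ⟨x, hx₁, hx₂, hxz ▸ hz₃⟩
  by_cases hyz : y = z
  · exact ⟨y, hy₁, hyz ▸ hz₂, hy₃⟩
  rw [(Sym2.mem_and_mem_iff hxy).mp ⟨hx₁, hy₁⟩, mem_edgeSet] at h₁
  rw [(Sym2.mem_and_mem_iff hxz).mp ⟨hx₂, hz₂⟩, mem_edgeSet] at h₂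
  rw [(Sym2.mem_and_mem_iff hyz).mp ⟨hy₃, hz₃⟩, mem_edgeSet] at h₃
  exact absurd (is3Clique_triple_iff.mpr ⟨h₁, h₂, h₃⟩) (hG _)

section Finite

variable [Fintype V] [DecidableEq V] [DecidableRel G.Adj]

variable (G) in
def lineStar (v : V) : Finset G.edgeSet := {e | v ∈ (e : Sym2 V)}

theorem card_lineStar (v : V) : #(G.lineStar v) = G.degree v := by
  rw [← card_incidenceFinset_eq_degree, ← card_map (Function.Embedding.subtype _)]
  congr 1
  ext e
  simp [lineStar, mem_incidenceFinset, incidenceSet, and_comm]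

theorem isClique_lineStar (v : V) : G.lineGraph.IsClique (G.lineStar v : Set G.edgeSet) := by
  intro e he f hf hef
  simp only [lineStar, coe_filter, mem_univ, true_and, Set.mem_ofPred_eq] at he hf
  exact lineGraph_adj_iff_exists.mpr ⟨hef, v, he, hf⟩

theorem card_lineStar_inter_le_one {v w : V} (hvw : v ≠ w) :
    #(G.lineStar v ∩ G.lineStar w) ≤ 1 := by
  refine card_le_one.mpr fun e he f hf => Subtype.ext ?_
  simp only [lineStar, mem_inter, mem_filter, mem_univ, true_and] at he hf
  rw [(Sym2.mem_and_mem_iff hvw).mp he, (Sym2.mem_and_mem_iff hvw).mp hf]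

theorem CliqueFree.lineGraph_isNClique_three_iff (hG : G.CliqueFree 3) {s : Finset G.edgeSet} :
    G.lineGraph.IsNClique 3 s ↔ ∃ v, s ∈ (G.lineStar v).powersetCard 3 := by
  simp only [mem_powersetCard]
  constructor
  · intro hs
    obtain ⟨e₁, e₂, e₃, h₁₂, h₁₃, h₂₃, rfl⟩ := is3Clique_iff.mp hs
    obtain ⟨v, hv₁, hv₂, hv₃⟩ := hG.exists_mem_of_pairwise_meet e₁.2 e₂.2 e₃.2
      (lineGraph_adj_iff_exists.mp h₁₂).2 (lineGraph_adj_iff_exists.mp h₁₃).2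
      (lineGraph_adj_iff_exists.mp h₂₃).2
    refine ⟨v, ?_, hs.card_eq⟩
    simp [insert_subset_iff, lineStar, hv₁, hv₂, hv₃]
  · rintro ⟨v, hsub, hcard⟩
    exact ⟨(isClique_lineStar v).subset (coe_subset.mpr hsub), hcard⟩

theorem CliqueFree.holeNumber_lineGraph (hG : G.CliqueFree 3) :
    G.lineGraph.holeNumber = ∑ v, (G.degree v).choose 3 := by
  have hdisj : (Set.univ : Set V).PairwiseDisjoint fun v => (G.lineStar v).powersetCard 3 := by
    intro v _ w _ hvw
    refine Finset.disjoint_left.mpr fun s hv hw => ?_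
    rw [mem_powersetCard] at hv hw
    have := card_le_card (subset_inter hv.1 hw.1)
    have := G.card_lineStar_inter_le_one hvw
    omega
  have htriangles : {s : Finset G.edgeSet | G.lineGraph.IsNClique 3 s} =
      ↑(univ.biUnion fun v => (G.lineStar v).powersetCard 3) := by
    ext s
    simp [hG.lineGraph_isNClique_three_iff]
  rw [holeNumber, htriangles, Set.ncard_coe_finset,
    card_biUnion (by simpa using hdisj)]
  simp_rw [card_powersetCard, card_lineStar]

end Finite

end SimpleGraph

/-- If `G` is a finite tree, then `h(L(G)) = ∑_{v ∈ V(G)} C(deg v, 3)`. -/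
theorem holeNumber_lineGraph_of_isTree {V : Type*} [Fintype V]
    (G : SimpleGraph V) [DecidableRel G.Adj] (htree : G.IsTree) :
    G.lineGraph.holeNumber = ∑ v : V, (G.degree v).choose 3 := by
  classical
  exact (htree.isAcyclic.colorable_two.cliqueFree (by norm_num)).holeNumber_lineGraph
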